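/- Suppose q is prime, p' ≥ 1 is coprime to q, (p' : G) ∈ N_{p,q}, and the division sequence C_{p·p',q} has a single equivalence class. Then N_{p,q} = ⊤, i.e., H_{p,q} is trivial. -/

import Mathlib

abbrev G : Type := {x : ℚ // 0 < x}

def toG (c : ℕ+) : G := ⟨(c : ℚ), by exact_mod_cast c.pos⟩

def Cmap (p q : ℕ+) (c : ℕ+) : ℕ+ :=
  if h : (q : ℕ) ∣ (c : ℕ) then
    ⟨(c : ℕ) / (q : ℕ), Nat.div_pos (Nat.le_of_dvd c.pos h) q.pos⟩
  else p * c + 1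

def E (p q : ℕ+) : ℕ+ → ℕ+ → Prop := Relation.EqvGen (fun c d => d = Cmap p q c)

def Npq (p q : ℕ+) : Subgroup G :=
  Subgroup.closure ({toG q} ∪ {x : G | ∃ c d : ℕ+, E p q c d ∧ x = toG c / toG d})

/-! A `C_{p p', q}` step `c ↦ p p' c + 1` on `c` coprime to `q` is the `C_{p, q}` step
on `p' c`, so modulo `N_{p,q}` it changes `c` only by the factor `p' ∈ N_{p,q}`; a division step
changes it by `q ∈ N_{p,q}`. Hence `c ≡ d` whenever `E_{p p', q} c d`, and if everything is
equivalent to `1`, all of `ℕ+`, which generates `G`, lies in `N_{p,q}`. -/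

theorem Relation.EqvGen.div_mem {α M : Type*} [Group M] {H : Subgroup M} {f : α → M}
    {r : α → α → Prop} (hr : ∀ a b, r a b → f a / f b ∈ H) {a b : α}
    (hab : Relation.EqvGen r a b) : f a / f b ∈ H := by
  have hequiv : Equivalence fun a b => f a / f b ∈ H :=
    ⟨fun a => by simp, fun h => by simpa using inv_mem h,
      fun hab hbc => by simpa using mul_mem hab hbc⟩
  exact hequiv.eqvGen_iff.1 (hab.mono hr)

@[simp]
theorem Positive.coe_div {K : Type*} [Field K] [LinearOrder K] [IsStrictOrderedRing K]
    (x y : {x : K // 0 < x}) : ((x / y : {x : K // 0 < x}) : K) = x / y := by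
  simp [div_eq_mul_inv]

lemma toG_mul (a b : ℕ+) : toG (a * b) = toG a * toG b :=
  Subtype.ext (by simp [toG])

lemma toG_one : toG 1 = 1 :=
  Subtype.ext (by simp [toG])

lemma exists_eq_toG_div_toG (x : G) : ∃ a b : ℕ+, x = toG a / toG b := by
  have hnum : 0 < x.val.num := Rat.num_pos.2 x.prop
  have hnum' : ((x.val.num.toNat : ℕ) : ℚ) = x.val.num := by
    exact_mod_cast Int.toNat_of_nonneg hnum.le
  refine ⟨⟨x.val.num.toNat, by omega⟩, ⟨x.val.den, x.val.pos⟩, Subtype.ext ?_⟩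
  simp [toG, hnum', Rat.num_div_den]

lemma eq_top_of_forall_toG_mem {H : Subgroup G} (h : ∀ c, toG c ∈ H) : H = ⊤ := by
  refine (Subgroup.eq_top_iff' H).2 fun x => ?_
  obtain ⟨a, b, rfl⟩ := exists_eq_toG_div_toG x
  exact div_mem (h a) (h b)

lemma Cmap_of_dvd (r : ℕ+) {q c : ℕ+} (hd : (q : ℕ) ∣ c) :
    Cmap r q c = ⟨c / q, Nat.div_pos (Nat.le_of_dvd c.pos hd) q.pos⟩ :=
  dif_pos hd

lemma Cmap_of_not_dvd (r : ℕ+) {q c : ℕ+} (hd : ¬ (q : ℕ) ∣ c) : Cmap r q c = r * c + 1 :=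
  dif_neg hd

lemma mul_Cmap_of_dvd (r : ℕ+) {q c : ℕ+} (hd : (q : ℕ) ∣ c) : q * Cmap r q c = c :=
  PNat.eq (by rw [PNat.mul_coe, Cmap_of_dvd r hd]; exact Nat.mul_div_cancel' hd)

lemma toG_eq_mul_toG_Cmap_of_dvd (r : ℕ+) {q c : ℕ+} (hd : (q : ℕ) ∣ c) :
    toG c = toG q * toG (Cmap r q c) := by
  rw [← toG_mul, mul_Cmap_of_dvd r hd]

lemma Cmap_mul_of_not_dvd (p : ℕ+) {p' q c : ℕ+} (h : ¬ (q : ℕ) ∣ (p' * c : ℕ+)) :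
    Cmap p q (p' * c) = Cmap (p * p') q c := by
  have hc : ¬ (q : ℕ) ∣ c := fun hc => h (by simpa using hc.mul_left (p' : ℕ))
  rw [Cmap_of_not_dvd p h, Cmap_of_not_dvd _ hc, mul_assoc]

lemma toG_div_toG_mem_Npq {p q c d : ℕ+} (hE : E p q c d) : toG c / toG d ∈ Npq p q :=
  Subgroup.subset_closure (Or.inr ⟨c, d, hE, rfl⟩)

lemma toG_div_toG_Cmap_mem_Npq {p p' q : ℕ+} (hq : (q : ℕ).Prime)
    (hcop : ¬ (q : ℕ) ∣ (p' : ℕ)) (h : toG p' ∈ Npq p q) (c : ℕ+) :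
    toG c / toG (Cmap (p * p') q c) ∈ Npq p q := by
  by_cases hd : (q : ℕ) ∣ c
  · rw [toG_eq_mul_toG_Cmap_of_dvd (p * p') hd, mul_div_cancel_right]
    exact Subgroup.subset_closure (Or.inl rfl)
  · have hqd : ¬ (q : ℕ) ∣ (p' * c : ℕ+) := by
      simpa [PNat.mul_coe, hq.dvd_mul] using ⟨hcop, hd⟩
    have hstep := toG_div_toG_mem_Npq (Relation.EqvGen.rel (p' * c) (Cmap p q (p' * c)) rfl)
    rw [Cmap_mul_of_not_dvd p hqd, toG_mul, mul_div_assoc] at hstep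
    simpa using mul_mem (inv_mem h) hstep

lemma toG_div_toG_mem_Npq_of_E_mul {p p' q : ℕ+} (hq : (q : ℕ).Prime)
    (hcop : ¬ (q : ℕ) ∣ (p' : ℕ)) (h : toG p' ∈ Npq p q) {c d : ℕ+} (hE : E (p * p') q c d) :
    toG c / toG d ∈ Npq p q :=
  hE.div_mem fun c _ hd => hd ▸ toG_div_toG_Cmap_mem_Npq hq hcop h c

theorem stmt13_general (p p' q : ℕ+) (hq : (q : ℕ).Prime)
    (hcop : ¬ (q : ℕ) ∣ (p' : ℕ)) (h : toG p' ∈ Npq p q)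
    (hone : ∀ c : ℕ+, E (p * p') q c 1) :
    Npq p q = ⊤ ∧ Subsingleton (G ⧸ Npq p q) := by
  have htop : Npq p q = ⊤ := eq_top_of_forall_toG_mem fun c => by
    have := toG_div_toG_mem_Npq_of_E_mul hq hcop h (hone c)
    rwa [toG_one, div_one] at this
  exact ⟨htop, htop ▸ QuotientGroup.subsingleton_quotient_top⟩

theorem stmt13 (p p' q : ℕ+) (hp : 1 ≤ p) (hp' : 1 ≤ p') (hq : (q : ℕ).Prime)
    (hcop : ¬ (q : ℕ) ∣ (p' : ℕ)) (h : toG p' ∈ Npq p q)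
    (hone : ∀ c : ℕ+, E (p * p') q c 1) :
    Npq p q = ⊤ ∧ Subsingleton (G ⧸ Npq p q) :=
  stmt13_general p p' q hq hcop h hone
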